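/- Let M be a matroid such that whenever C₁, C₂ are circuits, the symmetric difference C₁ △ C₂ is empty or contains a circuit. Then M has no circuit C and cocircuit D with |C ∩ D| = 3. -/

import Mathlib

open Set

namespace Matroid

variable {α : Type*}

/-- A circuit of a matroid is a minimal dependent set. -/
def Circuit (M : Matroid α) (C : Set α) : Prop :=
  M.Dep C ∧ ∀ D, M.Dep D → D ⊆ C → D = C

/-- A cocircuit is a circuit of the dual matroid. -/
def Cocircuit (M : Matroid α) (D : Set α) : Prop := M✶.Circuit D

/-- The matroid obtained by deleting the set `D`. -/
def delete' (M : Matroid α) (D : Set α) : Matroid α := M ↾ (M.E \ D)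

/-- The matroid obtained by contracting the set `C`. -/
def contract' (M : Matroid α) (C : Set α) : Matroid α := ((M✶).delete' C)✶

/-- `N` is a minor of `M` if it is obtained from `M` by contracting a set `C`
and deleting a set `D`, where `C` and `D` are disjoint subsets of the ground set. -/
def IsMinor' (N M : Matroid α) : Prop :=
  ∃ C D, Disjoint C D ∧ C ∪ D ⊆ M.E ∧ N = (M.contract' C).delete' D

/-- A scrawl is a union of circuits. -/
def Scrawl (M : Matroid α) (W : Set α) : Prop :=
  ∃ S : Set (Set α), (∀ C ∈ S, M.Circuit C) ∧ W = ⋃₀ S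

/-- A matroid is tame if every circuit-cocircuit intersection is finite. -/
def Tame (M : Matroid α) : Prop :=
  ∀ C D, M.Circuit C → M.Cocircuit D → (C ∩ D).Finite

/-- A `k`-painting of a matroid: nonzero coefficients on each circuit and each
cocircuit such that each circuit-cocircuit pair is "orthogonal". -/
def IsPainting {k : Type*} [Field k] (M : Matroid α)
    (c : Set α → α → k) (d : Set α → α → k) : Prop :=
  (∀ C, M.Circuit C → ∀ e ∈ C, c C e ≠ 0) ∧
  (∀ D, M.Cocircuit D → ∀ e ∈ D, d D e ≠ 0) ∧
  (∀ C D, M.Circuit C → M.Cocircuit D →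
    (C ∩ D).Finite ∧ ∑ᶠ e ∈ C ∩ D, c C e * d D e = 0)

end Matroid

/-! Write `C ∩ D = {x, y, z}` and extend `C \ D` to a basis `B` of `E \ D`. Then `B + x` is a
base, and the fundamental circuit `C'` of `y` with respect to it meets `D` in exactly `{x, y}`,
because a circuit never meets a cocircuit in a single element. For the same reason `C ∆ C'`,
which meets `D` only in `z` and lies in `B` off `D`, is independent; as it contains `z`, it is
neither empty nor contains a circuit. -/

namespace Matroid

variable {α : Type*} {M : Matroid α} {B C K X : Set α} {e x y : α}

lemma circuit_iff_isCircuit : M.Circuit C ↔ M.IsCircuit C := by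
  rw [isCircuit_iff]
  exact ⟨fun h ↦ ⟨h.1, fun D hD hDC ↦ h.2 D hD hDC⟩,
    fun h ↦ ⟨h.1, fun D hD hDC ↦ h.2 hD hDC⟩⟩

lemma cocircuit_iff_isCocircuit : M.Cocircuit K ↔ M.IsCocircuit K :=
  circuit_iff_isCircuit

lemma IsCocircuit.insert_compl_spanning (hK : M.IsCocircuit K) (he : e ∈ K) :
    M.Spanning (insert e (M.E \ K)) := by
  have heE := hK.subset_ground he
  rw [isCocircuit_iff_minimal_compl_nonspanning, minimal_iff_forall_ssubset] at hK
  have hsp := hK.2 (sdiff_singleton_ssubset.2 he)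
  rwa [not_not, sdiff_sdiff_eq_sdiff_union (singleton_subset_iff.2 heE), union_singleton] at hsp

lemma IsCocircuit.notMem_closure_compl (hK : M.IsCocircuit K) (he : e ∈ K) :
    e ∉ M.closure (M.E \ K) := by
  intro hecl
  have hsp := hK.insert_compl_spanning he
  rw [spanning_iff_closure_eq, closure_insert_eq_of_mem_closure hecl,
    ← spanning_iff_closure_eq] at hsp
  exact (isCocircuit_iff_minimal_compl_nonspanning.1 hK).1 hsp

lemma IsCocircuit.insert_isBase_of_isBasis_compl (hK : M.IsCocircuit K)
    (hB : M.IsBasis B (M.E \ K)) (he : e ∈ K) : M.IsBase (insert e B) := by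
  refine (hB.insert_isBasis_insert_of_notMem_closure ?_ (hK.subset_ground he)).isBase_of_spanning
    (hK.insert_compl_spanning he)
  rw [hB.closure_eq_closure]
  exact hK.notMem_closure_compl he

lemma IsCircuit.disjoint_of_inter_subset_singleton (hC : M.IsCircuit C)
    (hK : M.IsCocircuit K) (hCK : C ∩ K ⊆ {e}) : Disjoint C K := by
  rw [disjoint_iff_inter_eq_empty]
  exact (subset_singleton_iff_eq.1 hCK).resolve_right (hC.inter_isCocircuit_ne_singleton hK)

lemma IsCocircuit.exists_isCircuit_inter_eq_pair (hK : M.IsCocircuit K)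
    (hB : M.IsBasis B (M.E \ K)) (hx : x ∈ K) (hy : y ∈ K) (hxy : x ≠ y) :
    ∃ C, M.IsCircuit C ∧ C ∩ K = {x, y} ∧ C \ K ⊆ B := by
  have hxB := hK.insert_isBase_of_isBasis_compl hB hx
  have hyxB : y ∉ insert x B := by
    rintro (rfl | hyB)
    exacts [hxy rfl, (hB.subset hyB).2 hy]
  set C := M.fundCircuit y (insert x B)
  have hC : M.IsCircuit C := hxB.fundCircuit_isCircuit (hK.subset_ground hy) hyxB
  have hCsub : C ⊆ insert y (insert x B) := fundCircuit_subset_insert ..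
  have hCK : C ∩ K ⊆ {x, y} := by
    rintro a ⟨haC, haK⟩
    obtain rfl | rfl | haB := hCsub haC
    exacts [Or.inr rfl, Or.inl rfl, absurd haK (hB.subset haB).2]
  have hyC : y ∈ C := mem_fundCircuit ..
  refine ⟨_, hC, hCK.antisymm (pair_subset ?_ ⟨hyC, hy⟩), ?_⟩
  · by_contra hxC
    refine (hC.disjoint_of_inter_subset_singleton hK (e := y) fun a ha ↦ ?_).ne_of_mem hyC hy rfl
    exact (hCK ha).resolve_left (by rintro rfl; exact hxC ha)
  · rintro a ⟨haC, haK⟩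
    obtain rfl | rfl | haB := hCsub haC
    exacts [absurd hy haK, absurd hx haK, haB]

lemma IsCocircuit.indep_of_inter_subset_singleton (hK : M.IsCocircuit K) (hXK : X ∩ K ⊆ {e})
    (hXi : M.Indep (X \ K)) (hXE : X ⊆ M.E) : M.Indep X := by
  by_contra hXd
  obtain ⟨C, hCX, hC⟩ := (M.dep_of_not_indep hXd hXE).exists_isCircuit_subset
  have hCK := hC.disjoint_of_inter_subset_singleton hK ((inter_subset_inter_left K hCX).trans hXK)
  exact hC.not_indep (hXi.subset (subset_sdiff.2 ⟨hCX, hCK⟩))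

end Matroid

/-- If the symmetric difference of any two circuits is empty or contains a circuit,
then no circuit meets a cocircuit in exactly three elements. -/
theorem stmt9 {α : Type*} (M : Matroid α)
    (h : ∀ C₁ C₂, M.Circuit C₁ → M.Circuit C₂ →
      symmDiff C₁ C₂ = ∅ ∨ ∃ C, M.Circuit C ∧ C ⊆ symmDiff C₁ C₂) :
    ¬ ∃ C D, M.Circuit C ∧ M.Cocircuit D ∧ (C ∩ D).ncard = 3 := by
  simp_rw [Matroid.circuit_iff_isCircuit, Matroid.cocircuit_iff_isCocircuit] at h ⊢
  rintro ⟨C, D, hC, hD, hCD⟩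
  obtain ⟨x, y, z, hxy, hxz, hyz, hCD⟩ := ncard_eq_three.1 hCD
  have hx : x ∈ C ∩ D := by simp [hCD]
  have hy : y ∈ C ∩ D := by simp [hCD]
  have hCDi : M.Indep (C \ D) := hC.ssubset_indep (sdiff_ssubset_left_iff.2 ⟨x, hx⟩)
  obtain ⟨B, hB, hCB⟩ :=
    hCDi.subset_isBasis_of_subset (sdiff_subset_sdiff_left hC.subset_ground)
  obtain ⟨C', hC', hC'D, hC'B⟩ := hD.exists_isCircuit_inter_eq_pair hB hx.2 hy.2 hxy
  have hΔD : symmDiff C C' ∩ D = {z} := by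
    rw [inter_symmDiff_distrib_right, hCD, hC'D]
    ext a
    simp only [mem_symmDiff, mem_insert_iff, mem_singleton_iff]
    grind
  have hΔ : M.Indep (symmDiff C C') := by
    refine hD.indep_of_inter_subset_singleton hΔD.subset (hB.indep.subset ?_)
      (symmDiff_subset_union.trans (union_subset hC.subset_ground hC'.subset_ground))
    rintro a ⟨ha, haD⟩
    obtain ⟨haC, -⟩ | ⟨haC', -⟩ := mem_symmDiff.1 ha
    exacts [hCB ⟨haC, haD⟩, hC'B ⟨haC', haD⟩]
  obtain hempty | ⟨C₀, hC₀, hC₀Δ⟩ := h C C' hC hC'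
  · simp [hempty] at hΔD
  · exact hC₀.not_indep (hΔ.subset hC₀Δ)
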